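/- If m ≥ 1 or n ≤ 1, then the rule from ¬□φ infer ¬□□φ is admissible in NA_{m,n}; consequently NRA_{m,n} = NA_{m,n}. -/
import Mathlib


inductive Formula : Type
  | bot : Formula
  | var : ℕ → Formula
  | neg : Formula → Formula
  | or : Formula → Formula → Formula
  | box : Formula → Formula
  deriving DecidableEq

namespace Formula

def imp (φ ψ : Formula) : Formula := .or (.neg φ) ψ

def and (φ ψ : Formula) : Formula := .neg (.or (.neg φ) (.neg ψ))

/-- □^n φ -/
def boxn : ℕ → Formula → Formula
  | 0, φ => φ
  | k+1, φ => .box (boxn k φ)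

/-- the set of subformulas -/
def sub : Formula → Finset Formula
  | .bot => {.bot}
  | .var p => {.var p}
  | .neg φ => insert (.neg φ) φ.sub
  | .or φ ψ => insert (.or φ ψ) (φ.sub ∪ ψ.sub)
  | .box φ => insert (.box φ) φ.sub

/-- ∼ρ -/
def negg : Formula → Formula
  | .neg φ => φ
  | φ => .neg φ

end Formula

def NSub (ψ : Formula) : Finset Formula := ψ.sub ∪ ψ.sub.image Formula.negg

/-- boolean evaluation treating boxed formulas and variables as atoms -/
def evalP (v : Formula → Bool) : Formula → Bool
  | .bot => false
  | .var p => v (.var p)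
  | .neg φ => !(evalP v φ)
  | .or φ ψ => evalP v φ || evalP v ψ
  | .box φ => v (.box φ)

/-- propositional tautologies in the modal language -/
def Tautology (φ : Formula) : Prop := ∀ v, evalP v φ = true

/-- Provability in NA_{m,n} (ros = false) and NRA_{m,n} (ros = true):
    propositional tautologies, the scheme □^n φ → □^m φ, modus ponens,
    necessitation, and (if ros) the rule Ros^□ : ¬□φ / ¬□□φ. -/
inductive Prov (m n : ℕ) (ros : Bool) : Formula → Prop
  | taut {φ} : Tautology φ → Prov m n ros φ
  | axA (φ) : Prov m n ros ((Formula.boxn n φ).imp (Formula.boxn m φ))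
  | mp {φ ψ} : Prov m n ros (φ.imp ψ) → Prov m n ros φ → Prov m n ros ψ
  | nec {φ} : Prov m n ros φ → Prov m n ros (.box φ)
  | ros {φ} : ros = true → Prov m n ros (.neg (.box φ)) →
      Prov m n ros (.neg (.box (.box φ)))

/-- An N-frame on world set W: a binary relation R_φ for each formula φ. -/
abbrev NFrame (W : Type) := Formula → W → W → Prop

structure NModel (W : Type) where
  Rel : NFrame W
  V : W → ℕ → Prop

/-- satisfaction in an N-model -/
def Sat {W : Type} (M : NModel W) : W → Formula → Prop
  | _, .bot => False
  | w, .var p => M.V w p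
  | w, .neg φ => ¬ Sat M w φ
  | w, .or φ ψ => Sat M w φ ∨ Sat M w ψ
  | w, .box φ => ∀ w', M.Rel φ w w' → Sat M w' φ

/-- x R_φ^k y : there is a φ-path of length k from x to y -/
def FPath {W : Type} (R : NFrame W) (φ : Formula) : ℕ → W → W → Prop
  | 0, x, y => x = y
  | k+1, x, y => ∃ w, R (Formula.boxn k φ) x w ∧ FPath R φ k w y

/-- (m,n)-accessibility for φ -/
def AccFor {W : Type} (R : NFrame W) (m n : ℕ) (φ : Formula) : Prop :=
  ∀ x y, FPath R φ m x y → FPath R φ n x y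

/-- Γ-(m,n)-accessibility -/
def SubAcc {W : Type} (R : NFrame W) (m n : ℕ) (Γ : Finset Formula) : Prop :=
  ∀ φ, Formula.boxn m φ ∈ Γ → AccFor R m n φ

/-- (m,n)-accessibility -/
def Accessible {W : Type} (R : NFrame W) (m n : ℕ) : Prop :=
  ∀ φ, AccFor R m n φ

def ValidM {W : Type} (M : NModel W) (ψ : Formula) : Prop := ∀ w, Sat M w ψ

def ValidF {W : Type} (R : NFrame W) (ψ : Formula) : Prop :=
  ∀ V : W → ℕ → Prop, ValidM ⟨R, V⟩ ψ



/-- valuation making every boxed formula true -/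
def vtrue : Formula → Bool := fun φ => match φ with
  | .box _ => true
  | _ => false

lemma sound_vtrue {m n : ℕ}
    (hax : ∀ φ : Formula,
      evalP vtrue ((Formula.boxn n φ).imp (Formula.boxn m φ)) = true)
    {φ : Formula} (hp : Prov m n false φ) : evalP vtrue φ = true := by
  induction hp with
  | taut ht => exact ht vtrue
  | axA ψ => exact hax ψ
  | mp h1 h2 ih1 ih2 =>
      simp only [Formula.imp, evalP, ih2, Bool.not_true, Bool.false_or] at ih1
      exact ih1
  | nec h ih => rfl
  | ros hr => exact absurd hr (by simp)

lemma adm_of_hax {m n : ℕ}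
    (hax : ∀ φ : Formula,
      evalP vtrue ((Formula.boxn n φ).imp (Formula.boxn m φ)) = true) :
    ∀ φ : Formula, Prov m n false (.neg (.box φ)) →
        Prov m n false (.neg (.box (.box φ))) := by
  intro φ hp
  have := sound_vtrue hax hp
  simp [evalP, vtrue] at this

lemma stmt4_main {m n : ℕ}
    (adm : ∀ φ : Formula, Prov m n false (.neg (.box φ)) →
        Prov m n false (.neg (.box (.box φ)))) :
    (∀ φ : Formula, Prov m n false (.neg (.box φ)) →
        Prov m n false (.neg (.box (.box φ)))) ∧
      (∀ φ : Formula, Prov m n true φ ↔ Prov m n false φ) := by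
  refine ⟨adm, fun φ => ⟨fun h => ?_, fun h => ?_⟩⟩
  · induction h with
    | taut t => exact .taut t
    | axA ψ => exact .axA ψ
    | mp _ _ ih1 ih2 => exact .mp ih1 ih2
    | nec _ ih => exact .nec ih
    | ros _ _ ih => exact adm _ ih
  · induction h with
    | taut t => exact .taut t
    | axA ψ => exact .axA ψ
    | mp _ _ ih1 ih2 => exact .mp ih1 ih2
    | nec _ ih => exact .nec ih
    | ros hr => simp at hr

theorem stmt4 (m n : ℕ) (h : 1 ≤ m ∨ n ≤ 1) :
    (∀ φ : Formula, Prov m n false (.neg (.box φ)) →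
        Prov m n false (.neg (.box (.box φ)))) ∧
      (∀ φ : Formula, Prov m n true φ ↔ Prov m n false φ) := by
  rcases Nat.eq_zero_or_pos m with hm | hm
  · subst hm
    have hn : n ≤ 1 := by omega
    interval_cases n
    · -- m = 0, n = 0 : axiom is φ → φ
      apply stmt4_main
      apply adm_of_hax
      intro φ
      simp [Formula.imp, Formula.boxn, evalP]
    · -- m = 0, n = 1 : NA_{0,1} ⊢ ¬□φ → ¬□□φ
      apply stmt4_main
      intro φ hp
      have ha : Prov 0 1 false ((Formula.box (Formula.box φ)).imp (Formula.box φ)) :=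
        Prov.axA (Formula.box φ)
      have ht : Tautology (((Formula.box (Formula.box φ)).imp (Formula.box φ)).imp
          ((Formula.neg (Formula.box φ)).imp
            (Formula.neg (Formula.box (Formula.box φ))))) := by
        intro v
        simp only [Formula.imp, evalP]
        cases v (Formula.box (Formula.box φ)) <;> cases v (Formula.box φ) <;> simp
      exact Prov.mp (Prov.mp (Prov.taut ht) ha) hp
  · -- m ≥ 1
    obtain ⟨k, rfl⟩ : ∃ k, m = k + 1 := ⟨m - 1, by omega⟩
    apply stmt4_main
    apply adm_of_hax
    intro φ
    simp [Formula.imp, Formula.boxn, evalP, vtrue]
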